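/- Let a > 0 and let X be a real random variable with the Gamma distribution of shape a and rate 1, so that E[X] = a. Then for every t > 0, P( |X − a| ≥ √(2at) + t ) ≤ 2·e^{−t}. -/

import Mathlib

/-!
Chernoff's method with the exponential moments `∫ e^{θx} dΓ(a, 1) = (1 - θ)^{-a}`, `θ < 1`.
Writing `t = a r² / 2`, so that `√(2at) = a r`, the event splits into the upper tail
`X ≥ a (1 + r + r²/2)` and the lower tail `X ≤ a (1 - r)`. With `θ = 1 - 1/(1 + r + r²/2)` the
upper bound reduces to `1 + r + r²/2 ≤ e^r`; with `θ = -r` the lower one reduces to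
`r - r²/2 ≤ log (1 + r)`.
-/

open MeasureTheory ProbabilityTheory

open Real Set
open scoped ENNReal

lemma gammaPDF_mul_exp {a r θ x : ℝ} (hr : 0 ≤ r) (hθ : θ < r) :
    gammaPDF a r x * ENNReal.ofReal (exp (θ * x)) =
      ENNReal.ofReal ((r / (r - θ)) ^ a) * gammaPDF a (r - θ) x := by
  rcases lt_or_ge x 0 with hx | hx
  · simp [gammaPDF_of_neg hx]
  have hrθ : 0 < r - θ := sub_pos.mpr hθ
  rw [gammaPDF_of_nonneg hx, gammaPDF_of_nonneg hx, mul_comm, ← ENNReal.ofReal_mul (exp_pos _).le,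
    ← ENNReal.ofReal_mul (by positivity)]
  have hpow : (r / (r - θ)) ^ a * (r - θ) ^ a = r ^ a := by
    rw [div_rpow hr hrθ.le, div_mul_cancel₀ _ (rpow_pos_of_pos hrθ a).ne']
  have hexp : exp (-(r * x)) * exp (θ * x) = exp (-((r - θ) * x)) := by
    rw [← exp_add]; ring_nf
  congr 1
  calc exp (θ * x) * (r ^ a / Gamma a * x ^ (a - 1) * exp (-(r * x)))
      = r ^ a / Gamma a * x ^ (a - 1) * (exp (-(r * x)) * exp (θ * x)) := by ring
    _ = (r / (r - θ)) ^ a * ((r - θ) ^ a / Gamma a * x ^ (a - 1) * exp (-((r - θ) * x))) := by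
      rw [hexp, ← hpow]; ring

lemma lintegral_exp_mul_gammaMeasure {a r θ : ℝ} (ha : 0 < a) (hr : 0 ≤ r) (hθ : θ < r) :
    ∫⁻ x, ENNReal.ofReal (exp (θ * x)) ∂gammaMeasure a r =
      ENNReal.ofReal ((r / (r - θ)) ^ a) := by
  have hpdf (r : ℝ) : Measurable (gammaPDF a r) := (measurable_gammaPDFReal a r).ennreal_ofReal
  rw [gammaMeasure, lintegral_withDensity_eq_lintegral_mul _ (hpdf r) (by fun_prop)]
  simp_rw [Pi.mul_apply, gammaPDF_mul_exp hr hθ]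
  rw [lintegral_const_mul _ (hpdf (r - θ)), lintegral_gammaPDF_eq_one ha (sub_pos.mpr hθ), mul_one]

lemma measure_Ici_le_exp_mul_lintegral_exp (ν : Measure ℝ) {l : ℝ} (hl : 0 ≤ l) (c : ℝ) :
    ν (Ici c) ≤ ENNReal.ofReal (exp (-(l * c))) * ∫⁻ x, ENNReal.ofReal (exp (l * x)) ∂ν := by
  rw [← lintegral_const_mul' _ _ ENNReal.ofReal_ne_top]
  refine meas_le_lintegral₀ (by fun_prop) fun x (hx : c ≤ x) => ?_
  rw [← ENNReal.ofReal_mul (exp_pos _).le, ← exp_add, ENNReal.one_le_ofReal]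
  exact one_le_exp (by nlinarith)

lemma measure_Iic_le_exp_mul_lintegral_exp (ν : Measure ℝ) {l : ℝ} (hl : 0 ≤ l) (c : ℝ) :
    ν (Iic c) ≤ ENNReal.ofReal (exp (l * c)) * ∫⁻ x, ENNReal.ofReal (exp (-l * x)) ∂ν := by
  rw [← lintegral_const_mul' _ _ ENNReal.ofReal_ne_top]
  refine meas_le_lintegral₀ (by fun_prop) fun x (hx : x ≤ c) => ?_
  rw [← ENNReal.ofReal_mul (exp_pos _).le, ← exp_add, ENNReal.one_le_ofReal]
  exact one_le_exp (by nlinarith)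

lemma sub_sq_div_two_le_log_one_add {x : ℝ} (hx : 0 ≤ x) : x - x ^ 2 / 2 ≤ log (1 + x) := by
  refine le_trans ?_ (le_log_one_add_of_nonneg hx)
  rw [le_div_iff₀ (by linarith)]
  nlinarith [pow_nonneg hx 3]

lemma gammaMeasure_Ici_le {a u : ℝ} (ha : 0 < a) (hu : 0 ≤ u) :
    gammaMeasure a 1 (Ici (a * (1 + u + u ^ 2 / 2))) ≤
      ENNReal.ofReal (exp (-(a * u ^ 2 / 2))) := by
  have hq : 1 ≤ 1 + u + u ^ 2 / 2 := by nlinarith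
  set q := 1 + u + u ^ 2 / 2 with hq_def
  have hq_inv : 0 < 1 / q := one_div_pos.mpr (by linarith)
  have hq_inv_le : 1 / q ≤ 1 := div_le_one_of_le₀ hq (by linarith)
  refine (measure_Ici_le_exp_mul_lintegral_exp _ (l := 1 - 1 / q) (by linarith) _).trans ?_
  rw [lintegral_exp_mul_gammaMeasure ha zero_le_one (by linarith),
    ← ENNReal.ofReal_mul (exp_pos _).le]
  refine ENNReal.ofReal_le_ofReal ?_
  have hlog : log q ≤ u := (log_le_iff_le_exp (by linarith)).mpr (quadratic_le_exp_of_nonneg hu)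
  rw [show 1 / (1 - (1 - 1 / q)) = q by field_simp; ring, rpow_def_of_pos (by linarith),
    ← exp_add, show (1 - 1 / q) * (a * q) = a * (q - 1) by field_simp]
  gcongr
  nlinarith [mul_le_mul_of_nonneg_left hlog ha.le]

lemma gammaMeasure_Iic_le {a u : ℝ} (ha : 0 < a) (hu : 0 ≤ u) :
    gammaMeasure a 1 (Iic (a * (1 - u))) ≤ ENNReal.ofReal (exp (-(a * u ^ 2 / 2))) := by
  refine (measure_Iic_le_exp_mul_lintegral_exp _ hu _).trans ?_
  rw [lintegral_exp_mul_gammaMeasure ha zero_le_one (by linarith),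
    ← ENNReal.ofReal_mul (exp_pos _).le]
  refine ENNReal.ofReal_le_ofReal ?_
  have hlog := sub_sq_div_two_le_log_one_add hu
  rw [sub_neg_eq_add, one_div, inv_rpow (by linarith), ← rpow_neg (by linarith),
    rpow_def_of_pos (by linarith), ← exp_add]
  gcongr
  nlinarith [mul_le_mul_of_nonneg_left hlog ha.le]

lemma gammaMeasure_abs_sub_ge_le {a u : ℝ} (ha : 0 < a) (hu : 0 ≤ u) :
    gammaMeasure a 1 {x | a * u + a * u ^ 2 / 2 ≤ |x - a|} ≤
      ENNReal.ofReal (2 * exp (-(a * u ^ 2 / 2))) := by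
  have hsub : {x | a * u + a * u ^ 2 / 2 ≤ |x - a|} ⊆
      Ici (a * (1 + u + u ^ 2 / 2)) ∪ Iic (a * (1 - u)) := by
    intro x (hx : _ ≤ |x - a|)
    rcases le_abs.mp hx with h | h
    · left; simp only [mem_Ici]; nlinarith
    · right; simp only [mem_Iic]; nlinarith [sq_nonneg u]
  calc gammaMeasure a 1 {x | a * u + a * u ^ 2 / 2 ≤ |x - a|}
      ≤ gammaMeasure a 1 (Ici (a * (1 + u + u ^ 2 / 2))) +
          gammaMeasure a 1 (Iic (a * (1 - u))) :=
        (measure_mono hsub).trans (measure_union_le _ _)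
    _ ≤ ENNReal.ofReal (exp (-(a * u ^ 2 / 2))) + ENNReal.ofReal (exp (-(a * u ^ 2 / 2))) :=
        add_le_add (gammaMeasure_Ici_le ha hu) (gammaMeasure_Iic_le ha hu)
    _ = ENNReal.ofReal (2 * exp (-(a * u ^ 2 / 2))) := by
        rw [← ENNReal.ofReal_add (exp_pos _).le (exp_pos _).le, two_mul]

theorem gamma_concentration_general
    {Ω : Type*} [MeasurableSpace Ω] (μ : Measure Ω)
    (a : ℝ) (ha : 0 < a)
    (X : Ω → ℝ) (hXmeas : Measurable X)
    (hX : Measure.map X μ = gammaMeasure a 1) :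
    ∀ t : ℝ, 0 < t →
      μ {ω | Real.sqrt (2 * a * t) + t ≤ |X ω - a|} ≤
        ENNReal.ofReal (2 * Real.exp (-t)) := by
  intro t ht
  obtain ⟨u, hu, rfl⟩ : ∃ u, 0 ≤ u ∧ t = a * u ^ 2 / 2 :=
    ⟨√(2 * t / a), sqrt_nonneg _, by rw [sq_sqrt (by positivity)]; field_simp⟩
  have hsqrt : √(2 * a * (a * u ^ 2 / 2)) = a * u := by
    rw [show 2 * a * (a * u ^ 2 / 2) = (a * u) ^ 2 by ring, sqrt_sq (by positivity)]
  have hmeas : MeasurableSet {x : ℝ | a * u + a * u ^ 2 / 2 ≤ |x - a|} :=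
    measurableSet_le measurable_const (by fun_prop)
  rw [hsqrt]
  calc μ {ω | a * u + a * u ^ 2 / 2 ≤ |X ω - a|}
      = gammaMeasure a 1 {x | a * u + a * u ^ 2 / 2 ≤ |x - a|} := by
        rw [← hX, Measure.map_apply hXmeas hmeas]; rfl
    _ ≤ _ := gammaMeasure_abs_sub_ge_le ha hu

/-- Concentration for a Gamma random variable: if `X ~ Gamma(a, 1)` (so `E[X] = a`),
then for every `t > 0`, `P(|X − a| ≥ √(2at) + t) ≤ 2e^{−t}`. -/
theorem gamma_concentration
    {Ω : Type*} [MeasurableSpace Ω] (μ : Measure Ω) [IsProbabilityMeasure μ]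
    (a : ℝ) (ha : 0 < a)
    (X : Ω → ℝ) (hXmeas : Measurable X)
    (hX : Measure.map X μ = gammaMeasure a 1) :
    ∀ t : ℝ, 0 < t →
      μ {ω | Real.sqrt (2 * a * t) + t ≤ |X ω - a|} ≤
        ENNReal.ofReal (2 * Real.exp (-t)) :=
  gamma_concentration_general μ a ha X hXmeas hX
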